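/- arXiv:2406.10749 — 2 statements merged into one kernel-verified Lean document; each statement's English description precedes it below -/
import Mathlib

section
/- Let $u \in L^p(B_r)$ for some $p > n$, where $B_r \subset \mathbb{C}^n$. Then for almost every $\zeta \in S^{2n-1}$, the sliced function $v(w) := u(w\zeta)$, as a function of $w$ in the disk $D_r \subset \mathbb{C}$, belongs to $L^q(D_r)$ for every $1 \le q < p/n$. -/
open MeasureTheory Metric Filter Set
open scoped ENNReal NNReal Topology Pointwise

noncomputable section

/-- Lebesgue (Haar) measure on `ℂⁿ` viewed as a real inner product space. -/
instance (n : ℕ) : MeasurableSpace (EuclideanSpace ℂ (Fin n)) := borel _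
instance (n : ℕ) : BorelSpace (EuclideanSpace ℂ (Fin n)) := ⟨rfl⟩
instance (n : ℕ) : MeasureSpace (EuclideanSpace ℂ (Fin n)) :=
  letI : InnerProductSpace ℝ (EuclideanSpace ℂ (Fin n)) := InnerProductSpace.rclikeToReal ℂ _
  measureSpaceOfInnerProductSpace

/-- The surface measure on the unit sphere `S^{2n-1} ⊂ ℂⁿ`. -/
def sphereMeasure (n : ℕ) : Measure (Metric.sphere (0 : EuclideanSpace ℂ (Fin n)) 1) :=
  (volume : Measure (EuclideanSpace ℂ (Fin n))).toSphere

/-- `u'` is the weak (distributional) differential of `u` on the open set `s`: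
integration by parts against smooth compactly supported test functions holds. -/
def HasWeakDerivOn {E F : Type*} [NormedAddCommGroup E] [NormedSpace ℝ E] [MeasureSpace E]
    [NormedAddCommGroup F] [NormedSpace ℝ F]
    (u : E → F) (u' : E → E →L[ℝ] F) (s : Set E) : Prop :=
  ∀ φ : E → ℝ, ContDiff ℝ (⊤ : ℕ∞) φ → HasCompactSupport φ → tsupport φ ⊆ s →
    ∀ v : E, ∫ x in s, φ x • u' x v = - ∫ x in s, (fderiv ℝ φ x v) • u x

/-- Membership in the Sobolev space `W^{1,p}(s)`, with prescribed weak differential `u'`. -/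
def MemW1p {E F : Type*} [NormedAddCommGroup E] [NormedSpace ℝ E] [MeasureSpace E]
    [NormedAddCommGroup F] [NormedSpace ℝ F]
    (u : E → F) (u' : E → E →L[ℝ] F) (p : ℝ≥0∞) (s : Set E) : Prop :=
  MemLp u p (volume.restrict s) ∧ HasWeakDerivOn u u' s ∧
    MemLp (fun x => ‖u' x‖) p (volume.restrict s)

/-- Local `Lᵖ` membership on an open set: `Lᵖ` on every compact subset. -/
def MemLpLocOn {E F : Type*} [NormedAddCommGroup E] [MeasureSpace E] [TopologicalSpace E]
    [NormedAddCommGroup F]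
    (u : E → F) (p : ℝ≥0∞) (s : Set E) : Prop :=
  ∀ K : Set E, K ⊆ s → IsCompact K → MemLp u p (volume.restrict K)

/-- Local Sobolev `W^{1,p}` membership on an open set, with prescribed weak differential. -/
def MemW1pLoc {n : ℕ} {F : Type*} [NormedAddCommGroup F] [NormedSpace ℝ F]
    (u : EuclideanSpace ℂ (Fin n) → F) (u' : EuclideanSpace ℂ (Fin n) → EuclideanSpace ℂ (Fin n) →L[ℝ] F)
    (p : ℝ≥0∞) (s : Set (EuclideanSpace ℂ (Fin n))) : Prop :=
  HasWeakDerivOn u u' s ∧ MemLpLocOn u p s ∧ MemLpLocOn (fun x => ‖u' x‖) p s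

/-- The `j`-th component `∂̄ⱼ = ½(∂ₓⱼ + i ∂_yⱼ)` of `∂̄`, evaluated on a real differential `D`. -/
def dbarComp {n : ℕ} {F : Type*} [NormedAddCommGroup F] [NormedSpace ℂ F]
    (D : EuclideanSpace ℂ (Fin n) →L[ℝ] F) (j : Fin n) : F :=
  ((1 : ℂ)/2) • (D (EuclideanSpace.single j 1) + Complex.I • D (EuclideanSpace.single j Complex.I))

/-- `|∂̄u| = (∑ⱼ ‖∂̄ⱼ u‖²)^{1/2}` computed from the real differential `D` of `u`. -/
def dbarNorm {n : ℕ} {F : Type*} [NormedAddCommGroup F] [NormedSpace ℂ F]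
    (D : EuclideanSpace ℂ (Fin n) →L[ℝ] F) : ℝ :=
  Real.sqrt (∑ j : Fin n, ‖dbarComp D j‖ ^ 2)

/-- `u` vanishes to infinite order at `z₀` in the `L^q` sense. -/
def VanishesInfOrderLq {E F : Type*} [NormedAddCommGroup E] [MeasureSpace E]
    [NormedAddCommGroup F] (u : E → F) (q : ℝ) (z0 : E) : Prop :=
  ∀ m : ℕ, 1 ≤ m →
    Tendsto (fun r : ℝ => r ^ (-(m : ℝ)) * ∫ z in Metric.ball z0 r, ‖u z‖ ^ q)
      (𝓝[>] 0) (𝓝 0)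

/-- `u` vanishes to infinite order at `0` in the pointwise sense: `|u(z)| = O(|z|^m)` for all `m`. -/
def VanishesInfOrderPtwise {E F : Type*} [NormedAddCommGroup E] [NormedAddCommGroup F]
    (u : E → F) : Prop :=
  ∀ m : ℕ, 1 ≤ m → ∃ C > (0:ℝ), ∃ δ > (0:ℝ), ∀ z : E, ‖z‖ < δ → ‖u z‖ ≤ C * ‖z‖ ^ m

/-- The differential of the slice `w ↦ u (w • ζ)`, namely `h ↦ (Du)(w•ζ) (h • ζ)`. -/
def sliceDeriv {n : ℕ} {F : Type*} [NormedAddCommGroup F] [NormedSpace ℂ F] [NormedSpace ℝ F]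
    (u' : EuclideanSpace ℂ (Fin n) → EuclideanSpace ℂ (Fin n) →L[ℝ] F)
    (ζ : EuclideanSpace ℂ (Fin n)) (w : ℂ) : ℂ →L[ℝ] F :=
  (u' (w • ζ)).comp ((ContinuousLinearMap.toSpanSingleton ℂ ζ).restrictScalars ℝ)


open Measure in
lemma lintegral_polar {E : Type*} [NormedAddCommGroup E] [NormedSpace ℝ E]
    [MeasurableSpace E] [BorelSpace E] [FiniteDimensional ℝ E] [Nontrivial E]
    (μ : Measure E) [μ.IsAddHaarMeasure] {F : E → ℝ≥0∞} (hF : Measurable F) :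
    ∫⁻ x, F x ∂μ = ∫⁻ ζ, (∫⁻ s in Set.Ioi (0:ℝ),
      ENNReal.ofReal (s ^ (Module.finrank ℝ E - 1)) * F (s • (ζ : E))) ∂μ.toSphere := by
  have hG : Measurable fun p : sphere (0:E) 1 × Ioi (0:ℝ) => F ((p.2 : ℝ) • (p.1 : E)) :=
    hF.comp <| (measurable_subtype_coe.comp measurable_snd).smul
      (measurable_subtype_coe.comp measurable_fst)
  have h3 : ∀ x : ({0}ᶜ : Set E),
      ((homeomorphUnitSphereProd E x).2 : ℝ) • ((homeomorphUnitSphereProd E x).1 : E) = x := by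
    intro x
    simp only [homeomorphUnitSphereProd_apply_fst_coe, homeomorphUnitSphereProd_apply_snd_coe]
    exact smul_inv_smul₀ (norm_ne_zero_iff.2 x.2) _
  calc ∫⁻ x, F x ∂μ
      = ∫⁻ x : ({0}ᶜ : Set E), F x ∂(μ.comap (↑)) := by
        rw [lintegral_subtype_comap (measurableSet_singleton 0).compl, restrict_compl_singleton]
    _ = ∫⁻ x : ({0}ᶜ : Set E),
          F (((homeomorphUnitSphereProd E x).2 : ℝ) • ((homeomorphUnitSphereProd E x).1 : E))
          ∂(μ.comap (↑)) := lintegral_congr fun x => (congrArg F (h3 x)).symm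
    _ = ∫⁻ p : sphere (0:E) 1 × Ioi (0:ℝ), F ((p.2 : ℝ) • (p.1 : E))
          ∂(μ.toSphere.prod (volumeIoiPow (Module.finrank ℝ E - 1))) :=
        (μ.measurePreserving_homeomorphUnitSphereProd).lintegral_comp hG
    _ = ∫⁻ ζ, (∫⁻ y : Ioi (0:ℝ), F ((y : ℝ) • (ζ : E)) ∂(volumeIoiPow (Module.finrank ℝ E - 1)))
          ∂μ.toSphere := lintegral_prod _ hG.aemeasurable
    _ = _ := by
        refine lintegral_congr fun ζ => ?_
        rw [volumeIoiPow, lintegral_withDensity_eq_lintegral_mul _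
          ((measurable_subtype_coe.pow_const _).ennreal_ofReal)
          (show Measurable fun y : (Ioi (0:ℝ)) => F ((y:ℝ) • (ζ:E)) from
            hF.comp (measurable_subtype_coe.smul measurable_const))]
        exact lintegral_subtype_comap measurableSet_Ioi
          (fun s : ℝ => ENNReal.ofReal (s ^ (Module.finrank ℝ E - 1)) * F (s • (ζ : E)))

lemma norm_smul_sphere {n : ℕ} (ω : ℂ) (hω : ‖ω‖ = 1)
    (ζ : sphere (0 : EuclideanSpace ℂ (Fin n)) 1) :
    ω • (ζ : EuclideanSpace ℂ (Fin n)) ∈ sphere (0 : EuclideanSpace ℂ (Fin n)) 1 := by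
  have := mem_sphere_zero_iff_norm.1 ζ.2
  simp [mem_sphere_zero_iff_norm, norm_smul, hω, this]

open Measure in
lemma rot_measurePreserving {n : ℕ} (ω : ℂ) (hω : ‖ω‖ = 1) :
    MeasurePreserving (fun ζ : sphere (0 : EuclideanSpace ℂ (Fin n)) 1 =>
      (⟨ω • (ζ : EuclideanSpace ℂ (Fin n)), norm_smul_sphere ω hω ζ⟩ :
        sphere (0 : EuclideanSpace ℂ (Fin n)) 1))
      (sphereMeasure n) (sphereMeasure n) := by
  set E := EuclideanSpace ℂ (Fin n)
  letI : InnerProductSpace ℝ E := InnerProductSpace.rclikeToReal ℂ _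
  have hω0 : ω ≠ 0 := by intro h; rw [h, norm_zero] at hω; norm_num at hω
  let e : E ≃ₗᵢ[ℝ] E :=
    { toLinearEquiv := (LinearEquiv.smulOfNeZero ℂ E ω hω0).restrictScalars ℝ
      norm_map' := fun x => by
        show ‖ω • x‖ = ‖x‖
        rw [norm_smul, hω, one_mul] }
  have he : ∀ x : E, e x = ω • x := fun x => rfl
  have hemp : MeasurePreserving e volume volume := e.measurePreserving
  have hrotc : Continuous (fun ζ : sphere (0:E) 1 =>
      (⟨ω • (ζ : E), norm_smul_sphere ω hω ζ⟩ : sphere (0:E) 1)) := by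
    apply Continuous.subtype_mk
    exact continuous_subtype_val.const_smul ω
  refine ⟨hrotc.measurable, ?_⟩
  ext s hs
  rw [Measure.map_apply hrotc.measurable hs]
  have hpre : MeasurableSet ((fun ζ : sphere (0:E) 1 =>
      (⟨ω • (ζ : E), norm_smul_sphere ω hω ζ⟩ : sphere (0:E) 1)) ⁻¹' s) :=
    hrotc.measurable hs
  rw [show sphereMeasure n = (volume : Measure E).toSphere from rfl,
    Measure.toSphere_apply' _ hpre, Measure.toSphere_apply' _ hs]
  congr 1
  have himg : (Subtype.val '' ((fun ζ : sphere (0:E) 1 =>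
      (⟨ω • (ζ : E), norm_smul_sphere ω hω ζ⟩ : sphere (0:E) 1)) ⁻¹' s))
      = (fun x : E => ω • x) ⁻¹' (Subtype.val '' s) := by
    ext x
    constructor
    · rintro ⟨ζ, hζ, rfl⟩
      exact ⟨_, hζ, rfl⟩
    · rintro ⟨ζ', hζ', hx⟩
      simp only at hx
      have hxs : x ∈ sphere (0:E) 1 := by
        have h1 : ‖ω • x‖ = 1 := by rw [← hx]; exact mem_sphere_zero_iff_norm.1 ζ'.2
        rw [norm_smul, hω, one_mul] at h1
        exact mem_sphere_zero_iff_norm.2 h1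
      refine ⟨⟨x, hxs⟩, ?_, rfl⟩
      show (⟨ω • x, _⟩ : sphere (0:E) 1) ∈ s
      have : (⟨ω • x, norm_smul_sphere ω hω ⟨x, hxs⟩⟩ : sphere (0:E) 1) = ζ' :=
        Subtype.ext hx.symm
      rw [this]; exact hζ'
  rw [himg]
  have hsmul : Ioo (0:ℝ) 1 • ((fun x : E => ω • x) ⁻¹' (Subtype.val '' s))
      = (fun x : E => ω • x) ⁻¹' (Ioo (0:ℝ) 1 • (Subtype.val '' s)) := by
    ext x
    simp only [Set.mem_smul, Set.mem_preimage]
    constructor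
    · rintro ⟨c, hc, y, hy, rfl⟩
      exact ⟨c, hc, ω • y, hy, smul_comm c ω y⟩
    · rintro ⟨c, hc, a, ha, hx⟩
      refine ⟨c, hc, ω⁻¹ • a, ?_, ?_⟩
      · show ω • ω⁻¹ • a ∈ _
        rw [smul_inv_smul₀ hω0]; exact ha
      · rw [smul_comm c ω⁻¹ a, hx, inv_smul_smul₀ hω0]
  rw [hsmul]
  calc volume ((fun x : E => ω • x) ⁻¹' (Ioo (0:ℝ) 1 • (Subtype.val '' s)))
      = Measure.map e.toMeasurableEquiv volume (Ioo (0:ℝ) 1 • (Subtype.val '' s)) := by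
        rw [MeasurableEquiv.map_apply]; rfl
    _ = volume (Ioo (0:ℝ) 1 • (Subtype.val '' s)) := by
        rw [show ⇑(e.toMeasurableEquiv) = ⇑e from rfl, hemp.map_eq]

lemma finrank_Ecn (n : ℕ) : Module.finrank ℝ (EuclideanSpace ℂ (Fin n)) = 2 * n := by
  have h := Module.finrank_mul_finrank ℝ ℂ (EuclideanSpace ℂ (Fin n))
  rw [Complex.finrank_real_complex, finrank_euclideanSpace_fin] at h
  exact h.symm

open Measure in
lemma master {n : ℕ} (hn : 1 ≤ n) {F : EuclideanSpace ℂ (Fin n) → ℝ≥0∞} (hF : Measurable F) :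
    ∫⁻ ζ, (∫⁻ w : ℂ, (‖w‖₊ : ℝ≥0∞) ^ (2*(n:ℝ) - 2) * F (w • (ζ : EuclideanSpace ℂ (Fin n))))
      ∂(sphereMeasure n)
    = (volume : Measure ℂ).toSphere univ * ∫⁻ z, F z := by
  haveI : Nonempty (Fin n) := ⟨⟨0, hn⟩⟩
  haveI : (volume : Measure (EuclideanSpace ℂ (Fin n))).IsAddHaarMeasure := by
    letI : InnerProductSpace ℝ (EuclideanSpace ℂ (Fin n)) := InnerProductSpace.rclikeToReal ℂ _
    exact inferInstance
  set H : EuclideanSpace ℂ (Fin n) → ℝ≥0∞ :=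
    fun x => ∫⁻ s in Ioi (0:ℝ), ENNReal.ofReal (s ^ (2*n-1)) * F (s • x) with hHdef
  have hjoint : Measurable fun p : (EuclideanSpace ℂ (Fin n)) × ℝ =>
      ENNReal.ofReal (p.2 ^ (2*n-1)) * F (p.2 • p.1) := by
    refine ((measurable_snd.pow_const _).ennreal_ofReal).mul (hF.comp ?_)
    exact (continuous_snd.smul continuous_fst).measurable
  have hH : Measurable H := by
    apply Measurable.lintegral_prod_right (f := fun (x : EuclideanSpace ℂ (Fin n)) (s : ℝ) =>
      ENNReal.ofReal (s ^ (2*n-1)) * F (s • x))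
    exact hjoint
  have step1 : ∫⁻ z, F z = ∫⁻ ζ, H ((ζ : sphere (0:EuclideanSpace ℂ (Fin n)) 1) :
      EuclideanSpace ℂ (Fin n)) ∂(sphereMeasure n) := by
    rw [show sphereMeasure n = (volume : Measure (EuclideanSpace ℂ (Fin n))).toSphere from rfl,
      lintegral_polar (volume : Measure (EuclideanSpace ℂ (Fin n))) hF]
    refine lintegral_congr fun ζ => ?_
    rw [hHdef]
    simp only [finrank_Ecn n]
  have step2 : ∀ ζ : sphere (0:EuclideanSpace ℂ (Fin n)) 1,
      (∫⁻ w : ℂ, (‖w‖₊ : ℝ≥0∞) ^ (2*(n:ℝ) - 2) * F (w • (ζ : EuclideanSpace ℂ (Fin n))))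
      = ∫⁻ ω : sphere (0:ℂ) 1, H ((ω : ℂ) • (ζ : EuclideanSpace ℂ (Fin n)))
          ∂((volume : Measure ℂ).toSphere) := by
    intro ζ
    have hGmeas : Measurable fun w : ℂ =>
        (‖w‖₊ : ℝ≥0∞) ^ (2*(n:ℝ) - 2) * F (w • (ζ : EuclideanSpace ℂ (Fin n))) := by
      refine (measurable_nnnorm.coe_nnreal_ennreal.pow_const _).mul (hF.comp ?_)
      exact (continuous_id.smul continuous_const).measurable
    rw [lintegral_polar (volume : Measure ℂ) hGmeas]
    refine lintegral_congr fun ω => ?_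
    rw [hHdef]
    rw [show Module.finrank ℝ ℂ - 1 = 1 from by rw [Complex.finrank_real_complex]]
    refine setLIntegral_congr_fun measurableSet_Ioi (fun s hs => ?_)
    have hs0 : (0:ℝ) < s := hs
    have hsmula : (s • (ω:ℂ)) • (ζ : EuclideanSpace ℂ (Fin n))
        = s • ((ω:ℂ) • (ζ : EuclideanSpace ℂ (Fin n))) := smul_assoc s (ω:ℂ) _
    have hns : ((‖s • (ω:ℂ)‖₊ : ℝ≥0∞)) = ENNReal.ofReal s := by
      have h1 : ‖s • (ω:ℂ)‖ = s := by
        rw [norm_smul, mem_sphere_zero_iff_norm.1 ω.2, mul_one, Real.norm_eq_abs, abs_of_pos hs0]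
      rw [← enorm_eq_nnnorm, ← ofReal_norm, h1]
    rw [hsmula, hns, pow_one]
    rw [show (2*(n:ℝ) - 2) = ((2*n - 2 : ℕ) : ℝ) from by push_cast [Nat.cast_sub (by omega : 2 ≤ 2*n)]; ring]
    rw [ENNReal.rpow_natCast, ← mul_assoc, ← pow_succ', show 2*n-2+1 = 2*n-1 from by omega,
      ← ENNReal.ofReal_pow hs0.le]
  haveI : IsFiniteMeasure (sphereMeasure n) := by
    have h : IsFiniteMeasure ((volume : Measure (EuclideanSpace ℂ (Fin n))).toSphere) :=
      inferInstance
    exact h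
  have hrotmeas : Measurable fun p : (sphere (0:EuclideanSpace ℂ (Fin n)) 1) × (sphere (0:ℂ) 1) =>
      H (((p.2 : ℂ)) • ((p.1 : EuclideanSpace ℂ (Fin n)))) := by
    refine hH.comp ?_
    exact ((continuous_subtype_val.comp continuous_snd).smul
      (continuous_subtype_val.comp continuous_fst)).measurable
  calc ∫⁻ ζ, (∫⁻ w : ℂ, (‖w‖₊ : ℝ≥0∞) ^ (2*(n:ℝ) - 2)
          * F (w • (ζ : EuclideanSpace ℂ (Fin n)))) ∂(sphereMeasure n)
      = ∫⁻ ζ, (∫⁻ ω : sphere (0:ℂ) 1, H ((ω : ℂ) • (ζ : EuclideanSpace ℂ (Fin n)))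
          ∂((volume : Measure ℂ).toSphere)) ∂(sphereMeasure n) :=
        lintegral_congr fun ζ => step2 ζ
    _ = ∫⁻ ω : sphere (0:ℂ) 1, (∫⁻ ζ, H ((ω : ℂ) • (ζ : EuclideanSpace ℂ (Fin n)))
          ∂(sphereMeasure n)) ∂((volume : Measure ℂ).toSphere) :=
        lintegral_lintegral_swap hrotmeas.aemeasurable
    _ = ∫⁻ ω : sphere (0:ℂ) 1, (∫⁻ ζ, H ((ζ : sphere (0:EuclideanSpace ℂ (Fin n)) 1) :
          EuclideanSpace ℂ (Fin n)) ∂(sphereMeasure n)) ∂((volume : Measure ℂ).toSphere) := by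
        refine lintegral_congr fun ω => ?_
        have h := (rot_measurePreserving (n := n) (ω : ℂ)
          (mem_sphere_zero_iff_norm.1 ω.2)).lintegral_comp (hH.comp measurable_subtype_coe)
        exact h
    _ = (volume : Measure ℂ).toSphere univ * ∫⁻ z, F z := by
        rw [lintegral_const, step1, mul_comm]

lemma lintegral_Ioo_rpow_lt_top {r c : ℝ} (hc : -1 < c) :
    ∫⁻ s in Ioo (0:ℝ) r, ENNReal.ofReal (s ^ c) < ⊤ := by
  have h1 : IntervalIntegrable (fun s : ℝ => s ^ c) volume 0 r :=
    intervalIntegral.intervalIntegrable_rpow' hc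
  have h2 : IntegrableOn (fun s : ℝ => s ^ c) (Ioo 0 r) volume :=
    h1.1.mono_set Ioo_subset_Ioc_self
  have h3 := h2.2
  refine lt_of_le_of_lt ?_ h3
  refine lintegral_mono fun s => ?_
  rw [← ofReal_norm]
  exact ENNReal.ofReal_le_ofReal (le_abs_self _)

lemma lintegral_rpow_disk (r : ℝ) {c : ℝ} (hc0 : 0 ≤ c) (hc : c < 2) :
    ∫⁻ w in ball (0:ℂ) r, (‖w‖₊ : ℝ≥0∞) ^ (-c) < ⊤ := by
  set F : ℂ → ℝ≥0∞ := (ball (0:ℂ) r).indicator (fun w => (‖w‖₊ : ℝ≥0∞) ^ (-c)) with hFdef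
  have hFm : Measurable F :=
    (measurable_nnnorm.coe_nnreal_ennreal.pow_const _).indicator measurableSet_ball
  have key : ∫⁻ w in ball (0:ℂ) r, (‖w‖₊ : ℝ≥0∞) ^ (-c) = ∫⁻ w, F w := by
    rw [hFdef, lintegral_indicator measurableSet_ball]
  rw [key, lintegral_polar (volume : Measure ℂ) hFm]
  have hinner : ∀ ω : sphere (0:ℂ) 1,
      (∫⁻ s in Ioi (0:ℝ), ENNReal.ofReal (s ^ (Module.finrank ℝ ℂ - 1)) * F (s • (ω:ℂ)))
      = ∫⁻ s in Ioo (0:ℝ) r, ENNReal.ofReal (s ^ (1-c)) := by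
    intro ω
    have hcongr : ∀ s ∈ Ioi (0:ℝ), ENNReal.ofReal (s ^ (Module.finrank ℝ ℂ - 1)) * F (s • (ω:ℂ))
        = (Ioo (0:ℝ) r).indicator (fun s => ENNReal.ofReal (s ^ (1-c))) s := by
      intro s hs
      have hs0 : (0:ℝ) < s := hs
      rw [show Module.finrank ℝ ℂ - 1 = 1 from by rw [Complex.finrank_real_complex], pow_one]
      have hnorm : ‖s • (ω:ℂ)‖ = s := by
        rw [norm_smul, mem_sphere_zero_iff_norm.1 ω.2, mul_one, Real.norm_eq_abs, abs_of_pos hs0]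
      have hns : ((‖s • (ω:ℂ)‖₊ : ℝ≥0∞)) = ENNReal.ofReal s := by
        rw [← enorm_eq_nnnorm, ← ofReal_norm, hnorm]
      by_cases hsr : s < r
      · rw [hFdef, indicator_of_mem (by rw [mem_ball_zero_iff, hnorm]; exact hsr),
          indicator_of_mem (by exact ⟨hs0, hsr⟩), hns,
          ENNReal.ofReal_rpow_of_pos hs0, ← ENNReal.ofReal_mul hs0.le,
          show s * s^(-c) = s^(1-c) from by
            rw [show (1:ℝ)-c = 1 + (-c) from by ring, Real.rpow_add hs0, Real.rpow_one]]
      · rw [hFdef, indicator_of_notMem (by rw [mem_ball_zero_iff, hnorm]; exact hsr),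
          indicator_of_notMem (fun h => hsr h.2), mul_zero]
    rw [setLIntegral_congr_fun measurableSet_Ioi hcongr]
    rw [lintegral_indicator measurableSet_Ioo, Measure.restrict_restrict measurableSet_Ioo,
      inter_eq_left.2 (fun x hx => hx.1)]
  calc ∫⁻ ω : sphere (0:ℂ) 1,
        (∫⁻ s in Ioi (0:ℝ), ENNReal.ofReal (s ^ (Module.finrank ℝ ℂ - 1)) * F (s • (ω:ℂ)))
        ∂((volume : Measure ℂ).toSphere)
      = ∫⁻ _ω : sphere (0:ℂ) 1, (∫⁻ s in Ioo (0:ℝ) r, ENNReal.ofReal (s ^ (1-c)))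
        ∂((volume : Measure ℂ).toSphere) := lintegral_congr hinner
    _ < ⊤ := by
        rw [lintegral_const]
        exact ENNReal.mul_lt_top (lintegral_Ioo_rpow_lt_top (by linarith)) (measure_lt_top _ _)

lemma holder_disk {r m p q : ℝ} (hm : 0 ≤ m) (hp : 0 < p) (hq0 : 0 < q) (hqp : q < p)
    (hc : m * q / (p - q) < 2) {f : ℂ → ℝ≥0∞}
    (hf : Measurable f)
    (hA : ∫⁻ w in ball (0:ℂ) r, (‖w‖₊ : ℝ≥0∞) ^ m * (f w) ^ p < ⊤) :
    ∫⁻ w in ball (0:ℂ) r, (f w) ^ q < ⊤ := by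
  set μb := (volume : Measure ℂ).restrict (ball (0:ℂ) r) with hμb
  set φ : ℂ → ℝ≥0∞ := fun w => ((‖w‖₊ : ℝ≥0∞) ^ m * (f w) ^ p) ^ (q/p) with hφdef
  set ψ : ℂ → ℝ≥0∞ := fun w => (‖w‖₊ : ℝ≥0∞) ^ (-(m*q/p)) with hψdef
  have hpq : p - q > 0 := by linarith
  have hab : Real.HolderConjugate (p/q) (p/(p-q)) := by
    rw [Real.holderConjugate_iff]
    constructor
    · rw [lt_div_iff₀ hq0]; linarith
    · rw [inv_div, inv_div]; field_simp; ring
  have hφm : Measurable φ :=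
    ((measurable_nnnorm.coe_nnreal_ennreal.pow_const _).mul (hf.pow_const _)).pow_const _
  have hψm : Measurable ψ := measurable_nnnorm.coe_nnreal_ennreal.pow_const _
  have h0 : ∀ᵐ w ∂μb, w ≠ 0 := by
    rw [ae_iff]
    have : {w : ℂ | ¬ w ≠ 0} = {0} := by ext w; simp
    rw [this]
    exact le_antisymm ((Measure.restrict_le_self (s := ball (0:ℂ) r)) _ |>.trans
      (by simp)) (zero_le)
  have heq : ∀ᵐ w ∂μb, (f w) ^ q = φ w * ψ w := by
    filter_upwards [h0] with w hw
    have hnw0 : ((‖w‖₊ : ℝ≥0∞)) ≠ 0 := by simpa using hw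
    have hnwt : ((‖w‖₊ : ℝ≥0∞)) ≠ ⊤ := ENNReal.coe_ne_top
    rw [hφdef, hψdef]
    simp only
    rw [ENNReal.mul_rpow_of_nonneg _ _ (by positivity : (0:ℝ) ≤ q/p),
      ← ENNReal.rpow_mul, ← ENNReal.rpow_mul,
      show p * (q/p) = q from by field_simp,
      show m * (q/p) = m*q/p from by ring,
      mul_comm ((‖w‖₊ : ℝ≥0∞) ^ (m*q/p)), mul_assoc,
      ← ENNReal.rpow_add _ _ hnw0 hnwt]
    simp
  rw [lintegral_congr_ae heq]
  have hHolder := ENNReal.lintegral_mul_le_Lp_mul_Lq μb hab hφm.aemeasurable hψm.aemeasurable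
  refine lt_of_le_of_lt hHolder ?_
  have e1 : ∫⁻ w, φ w ^ (p/q) ∂μb = ∫⁻ w, (‖w‖₊ : ℝ≥0∞) ^ m * (f w) ^ p ∂μb := by
    refine lintegral_congr fun w => ?_
    rw [hφdef]
    simp only
    rw [← ENNReal.rpow_mul, show (q/p) * (p/q) = 1 from by field_simp, ENNReal.rpow_one]
  have e2 : ∫⁻ w, ψ w ^ (p/(p-q)) ∂μb = ∫⁻ w, (‖w‖₊ : ℝ≥0∞) ^ (-(m*q/(p-q))) ∂μb := by
    refine lintegral_congr fun w => ?_
    rw [hψdef]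
    simp only
    rw [← ENNReal.rpow_mul, show -(m*q/p) * (p/(p-q)) = -(m*q/(p-q)) from by field_simp]
  rw [e1, e2]
  have hψfin : ∫⁻ w, (‖w‖₊ : ℝ≥0∞) ^ (-(m*q/(p-q))) ∂μb < ⊤ :=
    lintegral_rpow_disk r (by positivity) hc
  exact ENNReal.mul_lt_top
    (ENNReal.rpow_lt_top_of_nonneg (by positivity) hA.ne)
    (ENNReal.rpow_lt_top_of_nonneg (by positivity) hψfin.ne)

/-- Slicing `Lᵖ` functions, `p > n`: for a.e. `ζ ∈ S^{2n-1}`, the slice `w ↦ u(wζ)` is in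
`L^q(D_r)` for every `1 ≤ q < p/n`. -/
theorem slice_memLq (n : ℕ) (hn : 1 ≤ n) (r p : ℝ) (hr : 0 < r) (hp : (n : ℝ) < p)
    (u : EuclideanSpace ℂ (Fin n) → ℂ)
    (hu : MemLp u (ENNReal.ofReal p) (volume.restrict (Metric.ball 0 r))) :
    ∀ᵐ ζ : Metric.sphere (0 : EuclideanSpace ℂ (Fin n)) 1 ∂(sphereMeasure n),
      ∀ q : ℝ, 1 ≤ q → q < p / n →
        MemLp (fun w : ℂ => u (w • (ζ : EuclideanSpace ℂ (Fin n)))) (ENNReal.ofReal q)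
          (volume.restrict (Metric.ball (0 : ℂ) r)) := by
  haveI : Nonempty (Fin n) := ⟨⟨0, hn⟩⟩
  haveI : (volume : Measure (EuclideanSpace ℂ (Fin n))).IsAddHaarMeasure := by
    letI : InnerProductSpace ℝ (EuclideanSpace ℂ (Fin n)) := InnerProductSpace.rclikeToReal ℂ _
    exact inferInstance
  haveI : IsFiniteMeasure (sphereMeasure n) := by
    have h : IsFiniteMeasure ((volume : Measure (EuclideanSpace ℂ (Fin n))).toSphere) :=
      inferInstance
    exact h
  have hn1 : (1:ℝ) ≤ (n:ℝ) := by exact_mod_cast hn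
  have hp0 : (0:ℝ) < p := lt_of_le_of_lt (by positivity) hp
  have hASM := hu.1
  set g := hASM.mk u with hgdef
  have hgsm : StronglyMeasurable g := hASM.stronglyMeasurable_mk
  have hug : u =ᵐ[volume.restrict (Metric.ball 0 r)] g := hASM.ae_eq_mk
  have hInt : ∫⁻ z in Metric.ball (0:EuclideanSpace ℂ (Fin n)) r,
      (‖g z‖₊ : ℝ≥0∞) ^ (p:ℝ) < ⊤ := by
    have h1 := hu.2
    rw [eLpNorm_congr_ae hug, eLpNorm_eq_lintegral_rpow_enorm_toReal
      (by exact (ENNReal.ofReal_pos.2 hp0).ne') ENNReal.ofReal_ne_top,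
      ENNReal.toReal_ofReal hp0.le] at h1
    exact (ENNReal.rpow_lt_top_iff_of_pos (by positivity : (0:ℝ) < 1/p)).1 h1
  set S : Set (EuclideanSpace ℂ (Fin n)) := {z | u z ≠ g z} with hSdef
  set N : Set (EuclideanSpace ℂ (Fin n)) :=
    toMeasurable (volume.restrict (Metric.ball (0:EuclideanSpace ℂ (Fin n)) r)) S
      ∩ Metric.ball 0 r with hNdef
  have hNm : MeasurableSet N := (measurableSet_toMeasurable _ _).inter measurableSet_ball
  have hNnull : volume N = 0 := by
    have h1 : (volume.restrict (Metric.ball (0:EuclideanSpace ℂ (Fin n)) r))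
        (toMeasurable (volume.restrict (Metric.ball (0:EuclideanSpace ℂ (Fin n)) r)) S) = 0 := by
      rw [measure_toMeasurable]
      exact hug
    rw [Measure.restrict_apply (measurableSet_toMeasurable _ _)] at h1
    exact h1
  set F₁ : EuclideanSpace ℂ (Fin n) → ℝ≥0∞ :=
    (Metric.ball (0:EuclideanSpace ℂ (Fin n)) r).indicator
      (fun z => (‖g z‖₊ : ℝ≥0∞) ^ (p:ℝ)) with hF₁def
  have hF₁ : Measurable F₁ :=
    ((hgsm.measurable.nnnorm.coe_nnreal_ennreal).pow_const _).indicator measurableSet_ball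
  set F₂ : EuclideanSpace ℂ (Fin n) → ℝ≥0∞ := N.indicator (fun _ => 1) with hF₂def
  have hF₂ : Measurable F₂ := measurable_const.indicator hNm
  have hjm : ∀ {F : EuclideanSpace ℂ (Fin n) → ℝ≥0∞}, Measurable F →
      Measurable fun ζ : Metric.sphere (0:EuclideanSpace ℂ (Fin n)) 1 =>
        ∫⁻ w : ℂ, (‖w‖₊:ℝ≥0∞) ^ (2*(n:ℝ)-2) * F (w • (ζ:EuclideanSpace ℂ (Fin n))) := by
    intro F hF
    apply Measurable.lintegral_prod_right
      (f := fun (ζ : Metric.sphere (0:EuclideanSpace ℂ (Fin n)) 1) (w : ℂ) =>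
        (‖w‖₊:ℝ≥0∞) ^ (2*(n:ℝ)-2) * F (w • (ζ:EuclideanSpace ℂ (Fin n))))
    refine ((measurable_snd.nnnorm.coe_nnreal_ennreal).pow_const _).mul (hF.comp ?_)
    exact (continuous_snd.smul (continuous_subtype_val.comp continuous_fst)).measurable
  have hae1 : ∀ᵐ ζ : Metric.sphere (0:EuclideanSpace ℂ (Fin n)) 1 ∂(sphereMeasure n),
      (∫⁻ w : ℂ, (‖w‖₊:ℝ≥0∞) ^ (2*(n:ℝ)-2) * F₁ (w • (ζ:EuclideanSpace ℂ (Fin n)))) < ⊤ := by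
    refine ae_lt_top (hjm hF₁) ?_
    rw [master hn hF₁]
    refine (ENNReal.mul_lt_top (measure_lt_top _ _) ?_).ne
    rw [hF₁def, lintegral_indicator measurableSet_ball]
    exact hInt
  have hae2 : ∀ᵐ ζ : Metric.sphere (0:EuclideanSpace ℂ (Fin n)) 1 ∂(sphereMeasure n),
      (∫⁻ w : ℂ, (‖w‖₊:ℝ≥0∞) ^ (2*(n:ℝ)-2) * F₂ (w • (ζ:EuclideanSpace ℂ (Fin n)))) = 0 := by
    refine (lintegral_eq_zero_iff (hjm hF₂)).1 ?_
    rw [master hn hF₂, hF₂def, lintegral_indicator hNm]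
    simp [hNnull]
  filter_upwards [hae1, hae2] with ζ h1 h2
  intro q hq1 hqn
  have hq0 : (0:ℝ) < q := lt_of_lt_of_le one_pos hq1
  have hζ1 : ‖(ζ:EuclideanSpace ℂ (Fin n))‖ = 1 := mem_sphere_zero_iff_norm.1 ζ.2
  have hnormw : ∀ w : ℂ, ‖w • (ζ:EuclideanSpace ℂ (Fin n))‖ = ‖w‖ := by
    intro w; rw [norm_smul, hζ1, mul_one]
  have hqp : q < p := lt_of_lt_of_le hqn (div_le_self hp0.le hn1)
  -- a.e. equality of the slices
  have h2' : ∀ᵐ w : ℂ ∂volume,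
      (‖w‖₊:ℝ≥0∞) ^ (2*(n:ℝ)-2) * F₂ (w • (ζ:EuclideanSpace ℂ (Fin n))) = 0 :=
    (lintegral_eq_zero_iff (((measurable_nnnorm.coe_nnreal_ennreal).pow_const _).mul
      (hF₂.comp (continuous_id.smul continuous_const).measurable))).1 h2
  have h0 : ∀ᵐ w : ℂ ∂volume, w ≠ 0 := by
    rw [ae_iff]
    have he : {w : ℂ | ¬ w ≠ 0} = {0} := by ext w; simp
    rw [he]
    exact measure_singleton 0
  have hwN : ∀ᵐ w : ℂ ∂volume, w • (ζ:EuclideanSpace ℂ (Fin n)) ∉ N := by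
    filter_upwards [h2', h0] with w hw hw0
    intro hmem
    have hb0 : ((‖w‖₊:ℝ≥0∞)) ≠ 0 := by simpa using hw0
    have hwpos : (0:ℝ≥0∞) < (‖w‖₊:ℝ≥0∞) ^ (2*(n:ℝ)-2) :=
      ENNReal.rpow_pos (lt_of_le_of_ne zero_le (Ne.symm hb0)) ENNReal.coe_ne_top
    rcases mul_eq_zero.1 hw with hl | hr
    · exact hwpos.ne' hl
    · rw [hF₂def, indicator_of_mem hmem] at hr
      exact one_ne_zero hr
  have hae_slice : (fun w : ℂ => u (w • (ζ:EuclideanSpace ℂ (Fin n))))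
      =ᶠ[ae (volume.restrict (Metric.ball (0:ℂ) r))]
      (fun w : ℂ => g (w • (ζ:EuclideanSpace ℂ (Fin n)))) := by
    filter_upwards [ae_restrict_of_ae hwN, ae_restrict_mem measurableSet_ball] with w hw hwball
    have hball : w • (ζ:EuclideanSpace ℂ (Fin n)) ∈
        Metric.ball (0:EuclideanSpace ℂ (Fin n)) r := by
      rw [mem_ball_zero_iff, hnormw]
      exact mem_ball_zero_iff.1 hwball
    by_contra hne
    exact hw ⟨subset_toMeasurable _ _ hne, hball⟩
  -- finiteness of the weighted slice integral
  have hA : ∫⁻ w in Metric.ball (0:ℂ) r,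
      (‖w‖₊:ℝ≥0∞) ^ (2*(n:ℝ)-2) * (‖g (w • (ζ:EuclideanSpace ℂ (Fin n)))‖₊:ℝ≥0∞) ^ (p:ℝ)
      < ⊤ := by
    have hcg : ∀ w ∈ Metric.ball (0:ℂ) r,
        (‖w‖₊:ℝ≥0∞) ^ (2*(n:ℝ)-2) * (‖g (w • (ζ:EuclideanSpace ℂ (Fin n)))‖₊:ℝ≥0∞) ^ (p:ℝ)
        = (‖w‖₊:ℝ≥0∞) ^ (2*(n:ℝ)-2) * F₁ (w • (ζ:EuclideanSpace ℂ (Fin n))) := by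
      intro w hw
      rw [hF₁def, indicator_of_mem]
      rw [mem_ball_zero_iff, hnormw]
      exact mem_ball_zero_iff.1 hw
    rw [setLIntegral_congr_fun measurableSet_ball hcg]
    exact lt_of_le_of_lt (setLIntegral_le_lintegral _ _) h1
  have hB : ∫⁻ w in Metric.ball (0:ℂ) r,
      ((‖g (w • (ζ:EuclideanSpace ℂ (Fin n)))‖₊:ℝ≥0∞)) ^ (q:ℝ) < ⊤ := by
    refine holder_disk (by linarith : (0:ℝ) ≤ 2*(n:ℝ)-2) hp0 hq0 hqp ?_ ?_ hA
    · rw [div_lt_iff₀ (by linarith : (0:ℝ) < p - q)]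
      have hqn' : q * n < p := by
        rw [lt_div_iff₀ (by linarith : (0:ℝ) < (n:ℝ))] at hqn
        exact hqn
      nlinarith
    · exact (hgsm.measurable.comp
        (continuous_id.smul continuous_const).measurable).nnnorm.coe_nnreal_ennreal
  have hslice_sm : StronglyMeasurable
      (fun w : ℂ => g (w • (ζ:EuclideanSpace ℂ (Fin n)))) :=
    hgsm.comp_measurable (continuous_id.smul continuous_const).measurable
  constructor
  · exact hslice_sm.aestronglyMeasurable.congr hae_slice.symm
  · rw [eLpNorm_congr_ae hae_slice, eLpNorm_eq_lintegral_rpow_enorm_toReal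
      (by exact (ENNReal.ofReal_pos.2 hq0).ne') ENNReal.ofReal_ne_top,
      ENNReal.toReal_ofReal hq0.le]
    exact ENNReal.rpow_lt_top_of_nonneg (by positivity) hB.ne

end
end

section
/- Let $0 < \epsilon < 1$ and let $u$ be a measurable function defined near $0 \in \mathbb{C}^n$ such that $u \in L^p$ near $0$ for some $p > 1$, and such that $u$ vanishes to infinite order in the $L^1$ sense at $0$. Then for every $1 < q < p$, the function $u(z)/|z|$ belongs to $L^q$ near $0$. -/
open MeasureTheory Metric Filter Set
open scoped ENNReal Topology

noncomputable section

lemma flat_key {E : Type*} [NormedAddCommGroup E] [MeasureSpace E] [OpensMeasurableSpace E]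
    (u : E → ℂ) (M : ℝ) (hM : 0 ≤ M) {δ₀ : ℝ} (hδ₀ : 0 < δ₀)
    (hint : ∀ r : ℝ, 0 < r → r ≤ δ₀ → IntegrableOn u (Metric.ball 0 r) volume)
    (hflat : VanishesInfOrderLq u 1 0) :
    ∃ δ : ℝ, 0 < δ ∧ δ ≤ δ₀ ∧
      ∫⁻ z in Metric.ball (0 : E) δ \ {0}, (‖u z‖₊ : ℝ≥0∞) * (‖z‖₊ : ℝ≥0∞) ^ (-M) < ⊤ := by
  set m : ℕ := ⌈M⌉₊ + 2 with hm_def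
  have hm1 : 1 ≤ m := by omega
  have hmM : M + 1 ≤ (m : ℝ) := by
    have := Nat.le_ceil M
    have h2 : ((⌈M⌉₊ + 2 : ℕ) : ℝ) = (⌈M⌉₊ : ℝ) + 2 := by push_cast; ring
    rw [hm_def, h2]; linarith
  have hev : ∀ᶠ r in 𝓝[>] (0:ℝ),
      r ^ (-(m : ℝ)) * ∫ z in Metric.ball (0:E) r, ‖u z‖ ^ (1:ℝ) < 1 :=
    (hflat m hm1).eventually_lt_const one_pos
  obtain ⟨δ₁, hδ₁, hsub⟩ := mem_nhdsGT_iff_exists_Ioc_subset.mp hev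
  set δ := min δ₁ δ₀ with hδ_def
  have hδpos : 0 < δ := lt_min hδ₁ hδ₀
  have hδδ₀ : δ ≤ δ₀ := min_le_right _ _
  refine ⟨δ, hδpos, hδδ₀, ?_⟩
  -- per-radius integral bound
  have hball : ∀ k : ℕ, ∫⁻ z in Metric.ball (0:E) (δ * (1/2) ^ k), (‖u z‖₊ : ℝ≥0∞)
      ≤ ENNReal.ofReal ((δ * (1/2) ^ k) ^ m) := by
    intro k
    set r := δ * (1/2:ℝ) ^ k with hr_def
    have hrpos : 0 < r := by positivity
    have hrδ : r ≤ δ := by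
      rw [hr_def]
      calc δ * (1/2:ℝ)^k ≤ δ * 1 :=
            mul_le_mul_of_nonneg_left (pow_le_one₀ (by norm_num) (by norm_num)) hδpos.le
        _ = δ := mul_one δ
    have hmem : r ∈ Ioc (0:ℝ) δ₁ := ⟨hrpos, hrδ.trans (min_le_left _ _)⟩
    have hP := hsub hmem
    simp only [Set.mem_setOf_eq, Real.rpow_one] at hP
    have hInt : ∫ z in Metric.ball (0:E) r, ‖u z‖ ≤ r ^ m := by
      have hrm : (0:ℝ) < r ^ m := pow_pos hrpos m
      have h2 : r ^ (-(m:ℝ)) = (r ^ m)⁻¹ := by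
        rw [← Real.rpow_natCast r m, ← Real.rpow_neg hrpos.le]
      rw [h2, inv_mul_lt_one₀ hrm] at hP
      exact hP.le
    have hInteg : IntegrableOn u (Metric.ball (0:E) r) volume :=
      hint r hrpos (hrδ.trans hδδ₀)
    calc ∫⁻ z in Metric.ball (0:E) r, (‖u z‖₊ : ℝ≥0∞)
        = ENNReal.ofReal (∫ z in Metric.ball (0:E) r, ‖u z‖) :=
          (ofReal_integral_norm_eq_lintegral_enorm hInteg).symm
      _ ≤ ENNReal.ofReal (r ^ m) := ENNReal.ofReal_le_ofReal hInt
  set A : ℕ → Set E := fun k =>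
    Metric.ball 0 (δ * (1/2) ^ k) \ Metric.ball 0 (δ * (1/2) ^ (k+1)) with hA_def
  have hcover : Metric.ball (0:E) δ \ {0} ⊆ ⋃ k, A k := by
    rintro z ⟨hz, hz0⟩
    rw [Metric.mem_ball, dist_zero_right] at hz
    have hzpos : 0 < ‖z‖ := norm_pos_iff.mpr (by simpa using hz0)
    have ht1 : ‖z‖ / δ < 1 := (div_lt_one hδpos).mpr hz
    have ht0 : 0 < ‖z‖ / δ := div_pos hzpos hδpos
    have hex : ∃ k : ℕ, (1/2:ℝ) ^ (k+1) ≤ ‖z‖ / δ := by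
      obtain ⟨j, hj⟩ := exists_pow_lt_of_lt_one ht0 (by norm_num : (1/2:ℝ) < 1)
      exact ⟨j, le_trans (pow_le_pow_of_le_one (by norm_num) (by norm_num) (Nat.le_succ j)) hj.le⟩
    have hk1 : (1/2:ℝ) ^ (Nat.find hex + 1) ≤ ‖z‖ / δ := Nat.find_spec hex
    set k := Nat.find hex with hk_def
    have hk2 : ‖z‖ / δ < (1/2:ℝ) ^ k := by
      rcases Nat.eq_zero_or_pos k with h0 | h0
      · rw [h0]; simpa using ht1
      · have hlt : k - 1 < k := by omega
        have hmin := Nat.find_min hex hlt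
        push_neg at hmin
        have hkk : k - 1 + 1 = k := by omega
        rwa [hkk] at hmin
    refine mem_iUnion.mpr ⟨k, ?_, ?_⟩
    · rw [Metric.mem_ball, dist_zero_right]
      calc ‖z‖ = (‖z‖/δ) * δ := by field_simp
        _ < (1/2)^k * δ := mul_lt_mul_of_pos_right hk2 hδpos
        _ = δ * (1/2)^k := mul_comm _ _
    · intro hmem
      rw [Metric.mem_ball, dist_zero_right] at hmem
      have hge : δ * (1/2)^(k+1) ≤ ‖z‖ := by
        calc δ * (1/2)^(k+1) = (1/2)^(k+1) * δ := mul_comm _ _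
          _ ≤ (‖z‖/δ) * δ := mul_le_mul_of_nonneg_right hk1 hδpos.le
          _ = ‖z‖ := by field_simp
      linarith
  -- real inequality
  have hreal : ∀ k : ℕ, (δ*(1/2:ℝ)^(k+1)) ^ (-M) * (δ*(1/2:ℝ)^k) ^ m
      ≤ (2:ℝ)^m * (δ/2)^((m:ℝ)-M) * (1/2)^k := by
    intro k
    have hs : (0:ℝ) < δ*(1/2)^(k+1) := by positivity
    have e1 : δ*(1/2:ℝ)^k = 2 * (δ*(1/2)^(k+1)) := by ring
    have e2 : δ*(1/2:ℝ)^(k+1) = (δ/2) * (1/2)^k := by ring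
    have hkey : ((1/2:ℝ)^k)^((m:ℝ)-M) ≤ (1/2:ℝ)^k := by
      rw [← Real.rpow_natCast (1/2:ℝ) k, ← Real.rpow_mul (by norm_num)]
      apply Real.rpow_le_rpow_of_exponent_ge (by norm_num) (by norm_num)
      have h1 : (1:ℝ) ≤ (m:ℝ) - M := by linarith
      exact le_mul_of_one_le_right (Nat.cast_nonneg k) h1
    calc (δ*(1/2:ℝ)^(k+1))^(-M) * (δ*(1/2:ℝ)^k)^m
        = (δ*(1/2:ℝ)^(k+1))^(-M) * ((2:ℝ)^m * (δ*(1/2:ℝ)^(k+1))^m) := by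
          rw [e1, mul_pow]
      _ = (2:ℝ)^m * ((δ*(1/2:ℝ)^(k+1))^((m:ℝ)) * (δ*(1/2:ℝ)^(k+1))^(-M)) := by
          rw [← Real.rpow_natCast (δ*(1/2:ℝ)^(k+1)) m]; ring
      _ = (2:ℝ)^m * (δ*(1/2:ℝ)^(k+1))^((m:ℝ) - M) := by
          rw [← Real.rpow_add hs, ← sub_eq_add_neg]
      _ = (2:ℝ)^m * ((δ/2)^((m:ℝ)-M) * ((1/2:ℝ)^k)^((m:ℝ)-M)) := by
          rw [e2, Real.mul_rpow (by positivity) (by positivity)]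
      _ ≤ (2:ℝ)^m * ((δ/2)^((m:ℝ)-M) * (1/2:ℝ)^k) := by
          have h2 : (0:ℝ) ≤ (δ/2)^((m:ℝ)-M) := Real.rpow_nonneg (by positivity) _
          have h3 : (0:ℝ) ≤ (2:ℝ)^m := by positivity
          apply mul_le_mul_of_nonneg_left _ h3
          exact mul_le_mul_of_nonneg_left hkey h2
      _ = (2:ℝ)^m * (δ/2)^((m:ℝ)-M) * (1/2)^k := by ring
  -- per annulus bound
  have hannulus : ∀ k : ℕ, ∫⁻ z in A k, (‖u z‖₊ : ℝ≥0∞) * (‖z‖₊ : ℝ≥0∞) ^ (-M)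
      ≤ ENNReal.ofReal ((2:ℝ) ^ m * (δ/2) ^ ((m:ℝ) - M) * (1/2) ^ k) := by
    intro k
    have hspos : 0 < δ * (1/2:ℝ)^(k+1) := by positivity
    have hstep : ∀ z ∈ A k, (‖u z‖₊ : ℝ≥0∞) * (‖z‖₊ : ℝ≥0∞)^(-M)
        ≤ (ENNReal.ofReal (δ * (1/2:ℝ)^(k+1)))^(-M) * (‖u z‖₊ : ℝ≥0∞) := by
      intro z hz
      have hz2 : δ * (1/2:ℝ)^(k+1) ≤ ‖z‖ := by
        have h5 := hz.2
        rw [Metric.mem_ball, dist_zero_right, not_lt] at h5; exact h5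
      have h3 : ENNReal.ofReal (δ * (1/2:ℝ)^(k+1)) ≤ (‖z‖₊ : ℝ≥0∞) := by
        rw [← enorm_eq_nnnorm, ← ofReal_norm_eq_enorm]
        exact ENNReal.ofReal_le_ofReal hz2
      have h4 : (‖z‖₊ : ℝ≥0∞)^(-M) ≤ (ENNReal.ofReal (δ * (1/2:ℝ)^(k+1)))^(-M) := by
        rw [ENNReal.rpow_neg, ENNReal.rpow_neg]
        exact ENNReal.inv_le_inv.mpr (ENNReal.rpow_le_rpow h3 hM)
      rw [mul_comm]
      exact mul_le_mul_left h4 _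
    have hAk_meas : MeasurableSet (A k) := measurableSet_ball.diff measurableSet_ball
    have hC_ne_top : (ENNReal.ofReal (δ * (1/2:ℝ)^(k+1)))^(-M) ≠ ⊤ := by
      rw [ENNReal.rpow_neg, ne_eq, ENNReal.inv_eq_top]
      exact (ENNReal.rpow_pos (ENNReal.ofReal_pos.mpr hspos) ENNReal.ofReal_ne_top).ne'
    calc ∫⁻ z in A k, (‖u z‖₊ : ℝ≥0∞) * (‖z‖₊ : ℝ≥0∞)^(-M)
        ≤ ∫⁻ z in A k, (ENNReal.ofReal (δ * (1/2:ℝ)^(k+1)))^(-M) * (‖u z‖₊ : ℝ≥0∞) :=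
          setLIntegral_mono' hAk_meas hstep
      _ = (ENNReal.ofReal (δ * (1/2:ℝ)^(k+1)))^(-M) * ∫⁻ z in A k, (‖u z‖₊ : ℝ≥0∞) :=
          lintegral_const_mul' _ _ hC_ne_top
      _ ≤ (ENNReal.ofReal (δ * (1/2:ℝ)^(k+1)))^(-M) * ENNReal.ofReal ((δ*(1/2:ℝ)^k) ^ m) := by
          gcongr
          exact le_trans (lintegral_mono_set diff_subset) (hball k)
      _ = ENNReal.ofReal ((δ * (1/2:ℝ)^(k+1)) ^ (-M) * (δ*(1/2:ℝ)^k) ^ m) := by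
          rw [ENNReal.ofReal_rpow_of_pos hspos,
            ← ENNReal.ofReal_mul (Real.rpow_nonneg hspos.le _)]
      _ ≤ ENNReal.ofReal ((2:ℝ) ^ m * (δ/2) ^ ((m:ℝ) - M) * (1/2) ^ k) :=
          ENNReal.ofReal_le_ofReal (hreal k)
  calc ∫⁻ z in Metric.ball (0:E) δ \ {0}, (‖u z‖₊ : ℝ≥0∞) * (‖z‖₊ : ℝ≥0∞) ^ (-M)
      ≤ ∫⁻ z in ⋃ k, A k, (‖u z‖₊ : ℝ≥0∞) * (‖z‖₊ : ℝ≥0∞) ^ (-M) :=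
        lintegral_mono_set hcover
    _ ≤ ∑' k, ∫⁻ z in A k, (‖u z‖₊ : ℝ≥0∞) * (‖z‖₊ : ℝ≥0∞) ^ (-M) :=
        lintegral_iUnion_le _ _
    _ ≤ ∑' k : ℕ, ENNReal.ofReal ((2:ℝ)^m * (δ/2)^((m:ℝ)-M)) * ENNReal.ofReal (1/2) ^ k := by
        apply ENNReal.tsum_le_tsum
        intro k
        refine (hannulus k).trans ?_
        rw [← ENNReal.ofReal_pow (by norm_num), ← ENNReal.ofReal_mul (by positivity)]
    _ = ENNReal.ofReal ((2:ℝ)^m * (δ/2)^((m:ℝ)-M)) * (1 - ENNReal.ofReal (1/2))⁻¹ := by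
        rw [ENNReal.tsum_mul_left, ENNReal.tsum_geometric]
    _ < ⊤ := by
        apply ENNReal.mul_lt_top ENNReal.ofReal_lt_top
        rw [ENNReal.inv_lt_top, tsub_pos_iff_lt]
        exact ENNReal.ofReal_lt_one.mpr (by norm_num)



/-- If `u ∈ Lᵖ` near `0` for some `p > 1` and `u` vanishes to infinite order in the `L¹` sense
at `0`, then `u/|z| ∈ L^q` near `0` for every `1 < q < p`. -/
theorem div_norm_memLq (n : ℕ) (hn : 1 ≤ n) (p ε : ℝ) (hp : 1 < p) (hε : 0 < ε) (hε1 : ε < 1)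
    (u : EuclideanSpace ℂ (Fin n) → ℂ)
    (hLp : ∃ δ > (0 : ℝ), MemLp u (ENNReal.ofReal p) (volume.restrict (Metric.ball 0 δ)))
    (hflat : VanishesInfOrderLq u 1 0) :
    ∀ q : ℝ, 1 < q → q < p →
      ∃ δ > (0 : ℝ), MemLp (fun z : EuclideanSpace ℂ (Fin n) => (‖z‖⁻¹ : ℝ) • u z)
        (ENNReal.ofReal q) (volume.restrict (Metric.ball 0 δ)) := by
  intro q hq1 hqp
  obtain ⟨δ₀, hδ₀, hu⟩ := hLp
  have hp0 : (0:ℝ) < p - 1 := by linarith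
  have hq0 : (0:ℝ) < q - 1 := by linarith
  have hpq : (0:ℝ) < p - q := by linarith
  set ε₀ : ℝ := (p - q)/(p - 1) with hε₀_def
  set a : ℝ := (p-1)/(q-1) with ha_def
  set b : ℝ := (p-1)/(p-q) with hb_def
  set M : ℝ := q*(p-1)/(p-q) with hM_def
  have hM : 0 ≤ M := by positivity
  have hb_pos : 0 < b := by positivity
  have hab : a.HolderConjugate b := by
    rw [Real.holderConjugate_iff]; constructor
    · rw [ha_def, lt_div_iff₀ hq0]; linarith
    · rw [ha_def, hb_def, inv_div, inv_div]
      field_simp; ring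
  have hε₀pos : 0 < ε₀ := by positivity
  have hqε₀ : 0 < q - ε₀ := by
    rw [hε₀_def, sub_pos, div_lt_iff₀ hp0]; nlinarith
  have hqa : (q - ε₀) * a = p := by
    rw [hε₀_def, ha_def]; field_simp; ring_nf
  have hεb : ε₀ * b = 1 := by
    rw [hε₀_def, hb_def]; field_simp
  have hqb : -q * b = -M := by
    rw [hM_def, hb_def]; field_simp
  haveI hHaar : (volume : Measure (EuclideanSpace ℂ (Fin n))).IsAddHaarMeasure := by
    letI : InnerProductSpace ℝ (EuclideanSpace ℂ (Fin n)) := InnerProductSpace.rclikeToReal ℂ _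
    exact isAddHaarMeasure_basis_addHaar _
  have hint : ∀ r : ℝ, 0 < r → r ≤ δ₀ → IntegrableOn u (Metric.ball 0 r) volume := by
    intro r hr hrδ
    have hmono : volume.restrict (Metric.ball (0:EuclideanSpace ℂ (Fin n)) r)
        ≤ volume.restrict (Metric.ball 0 δ₀) :=
      Measure.restrict_mono (Metric.ball_subset_ball hrδ) le_rfl
    have hur : MemLp u (ENNReal.ofReal p) (volume.restrict (Metric.ball 0 r)) :=
      hu.mono_measure hmono
    haveI : IsFiniteMeasure (volume.restrict (Metric.ball (0:EuclideanSpace ℂ (Fin n)) r)) := by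
      constructor
      rw [Measure.restrict_apply_univ]
      exact measure_ball_lt_top
    exact hur.integrable (ENNReal.one_le_ofReal.mpr hp.le)
  obtain ⟨δ, hδpos, hδδ₀, hkey⟩ := flat_key u M hM hδ₀ hint hflat
  refine ⟨δ, hδpos, ?_⟩
  have hmono : volume.restrict (Metric.ball (0:EuclideanSpace ℂ (Fin n)) δ)
      ≤ volume.restrict (Metric.ball 0 δ₀) :=
    Measure.restrict_mono (Metric.ball_subset_ball hδδ₀) le_rfl
  constructor
  · exact ((measurable_norm.inv).aestronglyMeasurable).smul (hu.1.mono_measure hmono)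
  · have hq_ne0 : ENNReal.ofReal q ≠ 0 := by
      rw [ne_eq, ENNReal.ofReal_eq_zero]; push_neg; linarith
    rw [eLpNorm_lt_top_iff_lintegral_rpow_enorm_lt_top hq_ne0 ENNReal.ofReal_ne_top,
      ENNReal.toReal_ofReal (by linarith : (0:ℝ) ≤ q)]; simp only [enorm_eq_nnnorm]
    have hsplit : Metric.ball (0:EuclideanSpace ℂ (Fin n)) δ
        = (Metric.ball 0 δ \ {0}) ∪ {0} :=
      (diff_union_of_subset (singleton_subset_iff.mpr (mem_ball_self hδpos))).symm
    rw [hsplit, lintegral_union (measurableSet_singleton 0) disjoint_sdiff_self_left]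
    have h0 : (∫⁻ z in ({0} : Set (EuclideanSpace ℂ (Fin n))),
        (‖(fun z : EuclideanSpace ℂ (Fin n) => (‖z‖⁻¹ : ℝ) • u z) z‖₊ : ℝ≥0∞) ^ q) = 0 := by
      rw [lintegral_singleton]
      simp [norm_zero, inv_zero, zero_smul, ENNReal.zero_rpow_of_pos (by linarith : (0:ℝ) < q)]
    rw [h0, add_zero]
    set μs := volume.restrict (Metric.ball (0:EuclideanSpace ℂ (Fin n)) δ \ {0}) with hμs
    have hsm : MeasurableSet (Metric.ball (0:EuclideanSpace ℂ (Fin n)) δ \ {0}) :=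
      measurableSet_ball.diff (measurableSet_singleton 0)
    have e2 : ∀ x : ℝ≥0∞, x ^ q = x ^ (q - ε₀) * x ^ ε₀ := fun x => by
      rw [← ENNReal.rpow_add_of_nonneg _ _ hqε₀.le hε₀pos.le, sub_add_cancel]
    have hcong : (∫⁻ z in Metric.ball (0:EuclideanSpace ℂ (Fin n)) δ \ {0},
          (‖(fun z : EuclideanSpace ℂ (Fin n) => (‖z‖⁻¹ : ℝ) • u z) z‖₊ : ℝ≥0∞) ^ q)
        = ∫⁻ z in Metric.ball (0:EuclideanSpace ℂ (Fin n)) δ \ {0},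
            ((fun z => (‖u z‖₊:ℝ≥0∞) ^ (q - ε₀)) *
              fun z : EuclideanSpace ℂ (Fin n) =>
                (‖u z‖₊:ℝ≥0∞) ^ ε₀ * (‖z‖₊:ℝ≥0∞) ^ (-q)) z := by
      apply setLIntegral_congr_fun hsm
      intro z hz
      have hzpos : 0 < ‖z‖ := norm_pos_iff.mpr (by simpa using hz.2)
      simp only [Pi.mul_apply]
      have e1 : (‖(‖z‖⁻¹:ℝ) • u z‖₊ : ℝ≥0∞) = (‖z‖₊:ℝ≥0∞)⁻¹ * (‖u z‖₊:ℝ≥0∞) := by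
        rw [nnnorm_smul]
        push_cast
        congr 1
        rw [← enorm_eq_nnnorm, ← ofReal_norm_eq_enorm, ← enorm_eq_nnnorm, ← ofReal_norm_eq_enorm,
          Real.norm_eq_abs, abs_of_nonneg (inv_nonneg.mpr (norm_nonneg z)),
          ENNReal.ofReal_inv_of_pos hzpos]
      rw [e1, ENNReal.mul_rpow_of_nonneg _ _ (by linarith : (0:ℝ) ≤ q),
        ENNReal.inv_rpow, ← ENNReal.rpow_neg, e2 ((‖u z‖₊ : ℝ≥0∞))]
      ring
    rw [hcong]
    have hu_ae : AEMeasurable (fun z => (‖u z‖₊ : ℝ≥0∞)) μs := by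
      have hmono2 : μs ≤ volume.restrict (Metric.ball 0 δ₀) :=
        Measure.restrict_mono (subset_trans diff_subset (Metric.ball_subset_ball hδδ₀)) le_rfl
      exact (hu.1.enorm).mono_measure hmono2
    have hf_ae : AEMeasurable (fun z => (‖u z‖₊:ℝ≥0∞) ^ (q-ε₀)) μs :=
      hu_ae.pow aemeasurable_const
    have hz_ae : AEMeasurable
        (fun z : EuclideanSpace ℂ (Fin n) => (‖z‖₊:ℝ≥0∞) ^ (-q)) μs :=
      ((measurable_nnnorm.coe_nnreal_ennreal).pow_const _).aemeasurable
    have hg_ae : AEMeasurable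
        (fun z : EuclideanSpace ℂ (Fin n) => (‖u z‖₊:ℝ≥0∞) ^ ε₀ * (‖z‖₊:ℝ≥0∞) ^ (-q)) μs :=
      (hu_ae.pow aemeasurable_const).mul hz_ae
    have hholder := ENNReal.lintegral_mul_le_Lp_mul_Lq μs hab hf_ae hg_ae
    have hfac1 : (∫⁻ z, ((‖u z‖₊:ℝ≥0∞) ^ (q-ε₀)) ^ a ∂μs) < ⊤ := by
      have e : (fun z => ((‖u z‖₊:ℝ≥0∞) ^ (q-ε₀)) ^ a)
          = fun z => (‖u z‖₊:ℝ≥0∞) ^ p := by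
        funext z; rw [← ENNReal.rpow_mul, hqa]
      rw [e]
      calc ∫⁻ z, (‖u z‖₊:ℝ≥0∞) ^ p ∂μs
          ≤ ∫⁻ z in Metric.ball 0 δ₀, (‖u z‖₊:ℝ≥0∞) ^ p ∂volume := by
            apply lintegral_mono'
            · exact Measure.restrict_mono
                (subset_trans diff_subset (Metric.ball_subset_ball hδδ₀)) le_rfl
            · exact le_rfl
        _ < ⊤ := by
            have hp_ne0 : ENNReal.ofReal p ≠ 0 := by
              rw [ne_eq, ENNReal.ofReal_eq_zero]; push_neg; linarith
            have := (eLpNorm_lt_top_iff_lintegral_rpow_enorm_lt_top hp_ne0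
              ENNReal.ofReal_ne_top).mp hu.2
            rwa [ENNReal.toReal_ofReal (by linarith : (0:ℝ) ≤ p)] at this
    have hfac2 : (∫⁻ z, ((‖u z‖₊:ℝ≥0∞) ^ ε₀ * (‖z‖₊:ℝ≥0∞) ^ (-q)) ^ b ∂μs) < ⊤ := by
      have e : (fun z : EuclideanSpace ℂ (Fin n) =>
            ((‖u z‖₊:ℝ≥0∞) ^ ε₀ * (‖z‖₊:ℝ≥0∞) ^ (-q)) ^ b)
          = fun z => (‖u z‖₊:ℝ≥0∞) * (‖z‖₊:ℝ≥0∞) ^ (-M) := by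
        funext z
        rw [ENNReal.mul_rpow_of_nonneg _ _ hb_pos.le, ← ENNReal.rpow_mul,
          ← ENNReal.rpow_mul, hεb, hqb, ENNReal.rpow_one]
      rw [e]
      exact hkey
    calc (∫⁻ z, ((fun z => (‖u z‖₊:ℝ≥0∞) ^ (q - ε₀)) *
            fun z : EuclideanSpace ℂ (Fin n) =>
              (‖u z‖₊:ℝ≥0∞) ^ ε₀ * (‖z‖₊:ℝ≥0∞) ^ (-q)) z ∂μs)
        ≤ (∫⁻ z, ((‖u z‖₊:ℝ≥0∞) ^ (q-ε₀)) ^ a ∂μs) ^ (1/a) *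
          (∫⁻ z, ((‖u z‖₊:ℝ≥0∞) ^ ε₀ * (‖z‖₊:ℝ≥0∞) ^ (-q)) ^ b ∂μs) ^ (1/b) := hholder
      _ < ⊤ := by
          apply ENNReal.mul_lt_top
          · exact ENNReal.rpow_lt_top_of_nonneg (by positivity) hfac1.ne
          · exact ENNReal.rpow_lt_top_of_nonneg (by positivity) hfac2.ne


end
end
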